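/- Let P ⊆ ℝ² be a finite set contained in the union of two axis-aligned closed squares of side 2, and let R = [x_min, x_max] × [y_min, y_max] be the axis-aligned bounding rectangle of P. For a corner u of R, let Q(u) denote the axis-aligned closed square of side 2 having u as a corner and extending toward R (so Q((x_min, y_min)) = [x_min, x_min+2] × [y_min, y_min+2], Q((x_max, y_min)) = [x_max−2, x_max] × [y_min, y_min+2], Q((x_min, y_max)) = [x_min, x_min+2] × [y_max−2, y_max], and Q((x_max, y_max)) = [x_max−2, x_max] × [y_max−2, y_max]). Then there exist two distinct corners u, v of R such that P ⊆ Q(u) ∪ Q(v). -/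
import Mathlib


theorem stmt_16 (P : Finset (ℝ × ℝ)) (hP : P.Nonempty)
    (hcover : ∃ a b c d : ℝ,
      ↑P ⊆ (Set.Icc a (a + 2) ×ˢ Set.Icc b (b + 2)) ∪ (Set.Icc c (c + 2) ×ˢ Set.Icc d (d + 2))) :
    ∃ i j : Fin 4, i ≠ j ∧
      ↑P ⊆
        (![Set.Icc (P.inf' hP Prod.fst) (P.inf' hP Prod.fst + 2) ×ˢ
              Set.Icc (P.inf' hP Prod.snd) (P.inf' hP Prod.snd + 2),
            Set.Icc (P.sup' hP Prod.fst - 2) (P.sup' hP Prod.fst) ×ˢ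
              Set.Icc (P.inf' hP Prod.snd) (P.inf' hP Prod.snd + 2),
            Set.Icc (P.inf' hP Prod.fst) (P.inf' hP Prod.fst + 2) ×ˢ
              Set.Icc (P.sup' hP Prod.snd - 2) (P.sup' hP Prod.snd),
            Set.Icc (P.sup' hP Prod.fst - 2) (P.sup' hP Prod.fst) ×ˢ
              Set.Icc (P.sup' hP Prod.snd - 2) (P.sup' hP Prod.snd)] i) ∪
        (![Set.Icc (P.inf' hP Prod.fst) (P.inf' hP Prod.fst + 2) ×ˢ
              Set.Icc (P.inf' hP Prod.snd) (P.inf' hP Prod.snd + 2),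
            Set.Icc (P.sup' hP Prod.fst - 2) (P.sup' hP Prod.fst) ×ˢ
              Set.Icc (P.inf' hP Prod.snd) (P.inf' hP Prod.snd + 2),
            Set.Icc (P.inf' hP Prod.fst) (P.inf' hP Prod.fst + 2) ×ˢ
              Set.Icc (P.sup' hP Prod.snd - 2) (P.sup' hP Prod.snd),
            Set.Icc (P.sup' hP Prod.fst - 2) (P.sup' hP Prod.fst) ×ˢ
              Set.Icc (P.sup' hP Prod.snd - 2) (P.sup' hP Prod.snd)] j) := by
  classical
  obtain ⟨a, b, c, d, hcov⟩ := hcover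
  obtain ⟨L, hL, hLx⟩ := Finset.exists_mem_eq_inf' hP Prod.fst
  obtain ⟨R, hR, hRx⟩ := Finset.exists_mem_eq_sup' hP Prod.fst
  obtain ⟨B, hB, hBy⟩ := Finset.exists_mem_eq_inf' hP Prod.snd
  obtain ⟨T, hT, hTy⟩ := Finset.exists_mem_eq_sup' hP Prod.snd
  set xm := P.inf' hP Prod.fst with hxmdef
  set xM := P.sup' hP Prod.fst with hxMdef
  set ym := P.inf' hP Prod.snd with hymdef
  set yM := P.sup' hP Prod.snd with hyMdef
  have hxm : ∀ p ∈ P, xm ≤ p.1 := fun p hp => Finset.inf'_le _ hp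
  have hxM : ∀ p ∈ P, p.1 ≤ xM := fun p hp => Finset.le_sup' _ hp
  have hym : ∀ p ∈ P, ym ≤ p.2 := fun p hp => Finset.inf'_le _ hp
  have hyM : ∀ p ∈ P, p.2 ≤ yM := fun p hp => Finset.le_sup' _ hp
  have hS : ∀ p ∈ P, (a ≤ p.1 ∧ p.1 ≤ a + 2 ∧ b ≤ p.2 ∧ p.2 ≤ b + 2) ∨
      (c ≤ p.1 ∧ p.1 ≤ c + 2 ∧ d ≤ p.2 ∧ p.2 ≤ d + 2) := by
    intro p hp
    have h := hcov (Finset.mem_coe.mpr hp)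
    simp only [Set.mem_union, Set.mem_prod, Set.mem_Icc] at h
    tauto
  by_cases hx : xM ≤ xm + 2
  · by_cases hy : yM ≤ ym + 2
    · refine ⟨0, 1, by decide, fun p hp => ?_⟩
      have hp' : p ∈ P := hp
      have k1 := hxm p hp'
      have k2 := hxM p hp'
      have k3 := hym p hp'
      have k4 := hyM p hp'
      simp only [Matrix.cons_val_zero, Matrix.cons_val_one, Matrix.head_cons, Matrix.cons_val_two, Matrix.tail_cons, Matrix.cons_val_three, Set.mem_union, Set.mem_prod, Set.mem_Icc]
      rcases hS p hp' with ⟨h1, h2, h3, h4⟩ | ⟨h1, h2, h3, h4⟩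
      · exact Or.inl ⟨⟨by linarith, by linarith⟩, by linarith, by linarith⟩
      · exact Or.inl ⟨⟨by linarith, by linarith⟩, by linarith, by linarith⟩
    · push_neg at hy
      rcases hS B hB with ⟨b1, b2, b3, b4⟩ | ⟨b1, b2, b3, b4⟩
      · rcases hS T hT with ⟨t1, t2, t3, t4⟩ | ⟨t1, t2, t3, t4⟩
        · exfalso; linarith
        · refine ⟨0, 2, by decide, fun p hp => ?_⟩
          have hp' : p ∈ P := hp
          have k1 := hxm p hp'
          have k2 := hxM p hp'
          have k3 := hym p hp'
          have k4 := hyM p hp'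
          simp only [Matrix.cons_val_zero, Matrix.cons_val_one, Matrix.head_cons, Matrix.cons_val_two, Matrix.tail_cons, Matrix.cons_val_three, Set.mem_union, Set.mem_prod, Set.mem_Icc]
          rcases hS p hp' with ⟨h1, h2, h3, h4⟩ | ⟨h1, h2, h3, h4⟩
          · exact Or.inl ⟨⟨by linarith, by linarith⟩, by linarith, by linarith⟩
          · exact Or.inr ⟨⟨by linarith, by linarith⟩, by linarith, by linarith⟩
      · rcases hS T hT with ⟨t1, t2, t3, t4⟩ | ⟨t1, t2, t3, t4⟩
        · refine ⟨0, 2, by decide, fun p hp => ?_⟩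
          have hp' : p ∈ P := hp
          have k1 := hxm p hp'
          have k2 := hxM p hp'
          have k3 := hym p hp'
          have k4 := hyM p hp'
          simp only [Matrix.cons_val_zero, Matrix.cons_val_one, Matrix.head_cons, Matrix.cons_val_two, Matrix.tail_cons, Matrix.cons_val_three, Set.mem_union, Set.mem_prod, Set.mem_Icc]
          rcases hS p hp' with ⟨h1, h2, h3, h4⟩ | ⟨h1, h2, h3, h4⟩
          · exact Or.inr ⟨⟨by linarith, by linarith⟩, by linarith, by linarith⟩
          · exact Or.inl ⟨⟨by linarith, by linarith⟩, by linarith, by linarith⟩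
        · exfalso; linarith
  · push_neg at hx
    rcases hS L hL with ⟨l1, l2, l3, l4⟩ | ⟨l1, l2, l3, l4⟩
    · rcases hS R hR with ⟨r1, r2, r3, r4⟩ | ⟨r1, r2, r3, r4⟩
      · exfalso; linarith
      · by_cases hy : yM ≤ ym + 2
        · refine ⟨0, 1, by decide, fun p hp => ?_⟩
          have hp' : p ∈ P := hp
          have k1 := hxm p hp'
          have k2 := hxM p hp'
          have k3 := hym p hp'
          have k4 := hyM p hp'
          simp only [Matrix.cons_val_zero, Matrix.cons_val_one, Matrix.head_cons, Matrix.cons_val_two, Matrix.tail_cons, Matrix.cons_val_three, Set.mem_union, Set.mem_prod, Set.mem_Icc]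
          rcases hS p hp' with ⟨h1, h2, h3, h4⟩ | ⟨h1, h2, h3, h4⟩
          · exact Or.inl ⟨⟨by linarith, by linarith⟩, by linarith, by linarith⟩
          · exact Or.inr ⟨⟨by linarith, by linarith⟩, by linarith, by linarith⟩
        · push_neg at hy
          rcases hS B hB with ⟨b1, b2, b3, b4⟩ | ⟨b1, b2, b3, b4⟩
          · rcases hS T hT with ⟨t1, t2, t3, t4⟩ | ⟨t1, t2, t3, t4⟩
            · exfalso; linarith
            · refine ⟨0, 3, by decide, fun p hp => ?_⟩
              have hp' : p ∈ P := hp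
              have k1 := hxm p hp'
              have k2 := hxM p hp'
              have k3 := hym p hp'
              have k4 := hyM p hp'
              simp only [Matrix.cons_val_zero, Matrix.cons_val_one, Matrix.head_cons, Matrix.cons_val_two, Matrix.tail_cons, Matrix.cons_val_three, Set.mem_union, Set.mem_prod, Set.mem_Icc]
              rcases hS p hp' with ⟨h1, h2, h3, h4⟩ | ⟨h1, h2, h3, h4⟩
              · exact Or.inl ⟨⟨by linarith, by linarith⟩, by linarith, by linarith⟩
              · exact Or.inr ⟨⟨by linarith, by linarith⟩, by linarith, by linarith⟩
          · rcases hS T hT with ⟨t1, t2, t3, t4⟩ | ⟨t1, t2, t3, t4⟩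
            · refine ⟨2, 1, by decide, fun p hp => ?_⟩
              have hp' : p ∈ P := hp
              have k1 := hxm p hp'
              have k2 := hxM p hp'
              have k3 := hym p hp'
              have k4 := hyM p hp'
              simp only [Matrix.cons_val_zero, Matrix.cons_val_one, Matrix.head_cons, Matrix.cons_val_two, Matrix.tail_cons, Matrix.cons_val_three, Set.mem_union, Set.mem_prod, Set.mem_Icc]
              rcases hS p hp' with ⟨h1, h2, h3, h4⟩ | ⟨h1, h2, h3, h4⟩
              · exact Or.inl ⟨⟨by linarith, by linarith⟩, by linarith, by linarith⟩
              · exact Or.inr ⟨⟨by linarith, by linarith⟩, by linarith, by linarith⟩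
            · exfalso; linarith
    · rcases hS R hR with ⟨r1, r2, r3, r4⟩ | ⟨r1, r2, r3, r4⟩
      · by_cases hy : yM ≤ ym + 2
        · refine ⟨0, 1, by decide, fun p hp => ?_⟩
          have hp' : p ∈ P := hp
          have k1 := hxm p hp'
          have k2 := hxM p hp'
          have k3 := hym p hp'
          have k4 := hyM p hp'
          simp only [Matrix.cons_val_zero, Matrix.cons_val_one, Matrix.head_cons, Matrix.cons_val_two, Matrix.tail_cons, Matrix.cons_val_three, Set.mem_union, Set.mem_prod, Set.mem_Icc]
          rcases hS p hp' with ⟨h1, h2, h3, h4⟩ | ⟨h1, h2, h3, h4⟩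
          · exact Or.inr ⟨⟨by linarith, by linarith⟩, by linarith, by linarith⟩
          · exact Or.inl ⟨⟨by linarith, by linarith⟩, by linarith, by linarith⟩
        · push_neg at hy
          rcases hS B hB with ⟨b1, b2, b3, b4⟩ | ⟨b1, b2, b3, b4⟩
          · rcases hS T hT with ⟨t1, t2, t3, t4⟩ | ⟨t1, t2, t3, t4⟩
            · exfalso; linarith
            · refine ⟨1, 2, by decide, fun p hp => ?_⟩
              have hp' : p ∈ P := hp
              have k1 := hxm p hp'
              have k2 := hxM p hp'
              have k3 := hym p hp'
              have k4 := hyM p hp'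
              simp only [Matrix.cons_val_zero, Matrix.cons_val_one, Matrix.head_cons, Matrix.cons_val_two, Matrix.tail_cons, Matrix.cons_val_three, Set.mem_union, Set.mem_prod, Set.mem_Icc]
              rcases hS p hp' with ⟨h1, h2, h3, h4⟩ | ⟨h1, h2, h3, h4⟩
              · exact Or.inl ⟨⟨by linarith, by linarith⟩, by linarith, by linarith⟩
              · exact Or.inr ⟨⟨by linarith, by linarith⟩, by linarith, by linarith⟩
          · rcases hS T hT with ⟨t1, t2, t3, t4⟩ | ⟨t1, t2, t3, t4⟩
            · refine ⟨0, 3, by decide, fun p hp => ?_⟩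
              have hp' : p ∈ P := hp
              have k1 := hxm p hp'
              have k2 := hxM p hp'
              have k3 := hym p hp'
              have k4 := hyM p hp'
              simp only [Matrix.cons_val_zero, Matrix.cons_val_one, Matrix.head_cons, Matrix.cons_val_two, Matrix.tail_cons, Matrix.cons_val_three, Set.mem_union, Set.mem_prod, Set.mem_Icc]
              rcases hS p hp' with ⟨h1, h2, h3, h4⟩ | ⟨h1, h2, h3, h4⟩
              · exact Or.inr ⟨⟨by linarith, by linarith⟩, by linarith, by linarith⟩
              · exact Or.inl ⟨⟨by linarith, by linarith⟩, by linarith, by linarith⟩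
            · exfalso; linarith
      · exfalso; linarith
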